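/- Let I be an instance of (3,B2)-SAT with variables x₁,…,xₙ and clauses c₁,…,c_m, where the three literals of each clause c are listed in a fixed order ℓ₁, ℓ₂, ℓ₃. Let G = (V,E) be the finite simple graph built as follows. For each clause c take seven vertices 1'_c, 2'_c, 1_c, 2_c, 3_c, 4_c, 5_c with edges 1'_c1_c, 1_c3_c, 2'_c2_c, 2_c3_c, 3_c4_c, 4_c5_c. For each variable x take three vertices x, ¬x, 1_x with edges x1_x and ¬x1_x. For each clause c with literals ℓ₁, ℓ₂, ℓ₃, add edges from 1'_c to the literal vertices of ℓ₁ and of ℓ₂, and an edge from 2'_c to the literal vertex of ℓ₃, where the literal vertex of a positive occurrence of x is x and of a negative occurrence is ¬x. Let U = {3_c, 4_c : clauses c} ∪ {1_x : variables x}. Then I is satisfiable if and only if G has a minimal dominating set S with U ⊆ S. -/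

import Mathlib

/-- Vertices of the graph built from a (3,B2)-SAT instance for Ext Dominating Set:
per clause `c` the vertices `1'_c, 2'_c, 1_c, 2_c, 3_c, 4_c, 5_c`, per variable `x`
the vertices `x, ¬x, 1_x`. -/
inductive V10 (n m : ℕ) : Type
  | p1 : Fin m → V10 n m   -- 1'_c
  | p2 : Fin m → V10 n m   -- 2'_c
  | c1 : Fin m → V10 n m
  | c2 : Fin m → V10 n m
  | c3 : Fin m → V10 n m
  | c4 : Fin m → V10 n m
  | c5 : Fin m → V10 n m
  | pos : Fin n → V10 n m  -- x
  | neg : Fin n → V10 n m  -- ¬x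
  | vx : Fin n → V10 n m   -- 1_x

/-- The literal vertex of an occurrence: `x` for positive, `¬x` for negative. -/
def litV10 (n m : ℕ) : Fin n × Bool → V10 n m
  | (v, true) => V10.pos v
  | (v, false) => V10.neg v

/-- Edges of the constructed graph. -/
def E10 (n m : ℕ) (lit : Fin m → Fin 3 → Fin n × Bool) : Set (Sym2 (V10 n m)) :=
  {e | (∃ j : Fin m,
          e = s(V10.p1 j, V10.c1 j) ∨ e = s(V10.c1 j, V10.c3 j) ∨
          e = s(V10.p2 j, V10.c2 j) ∨ e = s(V10.c2 j, V10.c3 j) ∨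
          e = s(V10.c3 j, V10.c4 j) ∨ e = s(V10.c4 j, V10.c5 j)) ∨
       (∃ i : Fin n, e = s(V10.pos i, V10.vx i) ∨ e = s(V10.neg i, V10.vx i)) ∨
       (∃ j : Fin m,
          e = s(V10.p1 j, litV10 n m (lit j 0)) ∨
          e = s(V10.p1 j, litV10 n m (lit j 1)) ∨
          e = s(V10.p2 j, litV10 n m (lit j 2)))}

/-- The pre-solution `U = {3_c, 4_c : clauses c} ∪ {1_x : variables x}`. -/
def U10 (n m : ℕ) : Set (V10 n m) :=
  {v | (∃ j : Fin m, v = V10.c3 j ∨ v = V10.c4 j) ∨ (∃ i : Fin n, v = V10.vx i)}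

/-- `S` is a dominating set of the graph with edge set `E`. -/
def DomSet {V : Type*} (E : Set (Sym2 V)) (S : Set V) : Prop :=
  ∀ v : V, v ∈ S ∨ ∃ u ∈ S, s(u, v) ∈ E

/-!
Given a satisfying assignment, the set formed by `U`, the true literal vertices, `1_c` when neither
`ℓ₁` nor `ℓ₂` is true and `2_c` when `ℓ₃` is false dominates the graph, and every vertex of `U` has
a private neighbour in it (`1_c` or `2_c` for `3_c`, `5_c` for `4_c`, the false literal vertex for
`1_x`); so every minimal dominating subset still contains `U`.

Conversely, let `S ⊇ U` be a minimal dominating set. The private neighbour of `1_x` forbids `x` and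
`¬x` from both lying in `S`. The private neighbour of `3_c` is `1_c` or `2_c`, so `1'_c` or `2'_c`
lies outside `S` and is dominated by a literal vertex of `c` in `S`. Making `x` true iff `x ∈ S`
thus satisfies every clause.
-/

section DominatingSet

variable {V : Type*} {E : Set (Sym2 V)} {S S₀ : Set V} {u p : V}

def IsPrivateNbr (E : Set (Sym2 V)) (S : Set V) (u p : V) : Prop :=
  ∀ w ∈ S, w = p ∨ s(w, p) ∈ E → w = u

namespace DomSet

lemma mem_of_isPrivateNbr (hS : DomSet E S) (hsub : S ⊆ S₀) (hp : IsPrivateNbr E S₀ u p) :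
    u ∈ S := by
  rcases hS p with hpS | ⟨w, hwS, hw⟩
  · exact hp p (hsub hpS) (Or.inl rfl) ▸ hpS
  · exact hp w (hsub hwS) (Or.inr hw) ▸ hwS

lemma exists_isPrivateNbr (hS : DomSet E S) (hmin : ∀ S' ⊂ S, ¬ DomSet E S') (hu : u ∈ S) :
    ∃ p, (p = u ∨ s(u, p) ∈ E) ∧ IsPrivateNbr E S u p := by
  obtain ⟨p, hp⟩ : ∃ p, ¬ (p ∈ S \ {u} ∨ ∃ w ∈ S \ {u}, s(w, p) ∈ E) := by
    simpa [DomSet] using hmin (S \ {u}) (Set.sdiff_singleton_ssubset.2 hu)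
  have hpriv : IsPrivateNbr E S u p := by
    rintro w hwS (rfl | hw) <;> by_contra hne
    exacts [hp (Or.inl ⟨hwS, hne⟩), hp (Or.inr ⟨w, ⟨hwS, hne⟩, hw⟩)]
  refine ⟨p, ?_, hpriv⟩
  rcases hS p with hpS | ⟨w, hwS, hw⟩
  · exact Or.inl (hpriv p hpS (Or.inl rfl))
  · exact Or.inr (hpriv w hwS (Or.inr hw) ▸ hw)

lemma exists_minimal_subset [Finite V] (hS : DomSet E S) :
    ∃ S' ⊆ S, DomSet E S' ∧ ∀ S'' ⊂ S', ¬ DomSet E S'' := by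
  obtain ⟨S', hS'S, hmin⟩ := exists_minimal_le_of_wellFoundedLT (DomSet E) S hS
  exact ⟨S', hS'S, hmin.prop, fun _ hlt => hmin.not_prop_of_lt hlt⟩

end DomSet

end DominatingSet

namespace V10

variable {n m : ℕ} {lit : Fin m → Fin 3 → Fin n × Bool}

def toSum : V10 n m → (Fin 7 × Fin m) ⊕ (Fin 3 × Fin n)
  | p1 j => .inl (0, j) | p2 j => .inl (1, j) | c1 j => .inl (2, j) | c2 j => .inl (3, j)
  | c3 j => .inl (4, j) | c4 j => .inl (5, j) | c5 j => .inl (6, j)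
  | pos i => .inr (0, i) | neg i => .inr (1, i) | vx i => .inr (2, i)

instance : Finite (V10 n m) :=
  Finite.of_injective toSum fun a b h => by cases a <;> cases b <;> simp_all [toSum]

lemma eq_litV10_iff {q : Fin n × Bool} {v : V10 n m} :
    v = litV10 n m q ↔ q.2 = true ∧ v = pos q.1 ∨ q.2 = false ∧ v = neg q.1 := by
  obtain ⟨i, _ | _⟩ := q <;> simp [litV10]

lemma litV10_eq_iff {q : Fin n × Bool} {v : V10 n m} :
    litV10 n m q = v ↔ q.2 = true ∧ v = pos q.1 ∨ q.2 = false ∧ v = neg q.1 := by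
  rw [eq_comm, eq_litV10_iff]

lemma adj_c1_iff {w : V10 n m} {j : Fin m} :
    s(w, c1 j) ∈ E10 n m lit ↔ w = p1 j ∨ w = c3 j := by
  simp only [E10, Set.mem_ofPred_eq, Sym2.eq_iff, eq_litV10_iff]; aesop

lemma adj_c2_iff {w : V10 n m} {j : Fin m} :
    s(w, c2 j) ∈ E10 n m lit ↔ w = p2 j ∨ w = c3 j := by
  simp only [E10, Set.mem_ofPred_eq, Sym2.eq_iff, eq_litV10_iff]; aesop

lemma adj_c3_iff {w : V10 n m} {j : Fin m} :
    s(w, c3 j) ∈ E10 n m lit ↔ w = c1 j ∨ w = c2 j ∨ w = c4 j := by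
  simp only [E10, Set.mem_ofPred_eq, Sym2.eq_iff, eq_litV10_iff]; aesop

lemma adj_c5_iff {w : V10 n m} {j : Fin m} : s(w, c5 j) ∈ E10 n m lit ↔ w = c4 j := by
  simp only [E10, Set.mem_ofPred_eq, Sym2.eq_iff, eq_litV10_iff]; aesop

lemma adj_p1_iff {w : V10 n m} {j : Fin m} :
    s(w, p1 j) ∈ E10 n m lit ↔
      w = c1 j ∨ w = litV10 n m (lit j 0) ∨ w = litV10 n m (lit j 1) := by
  simp only [E10, Set.mem_ofPred_eq, Sym2.eq_iff, eq_litV10_iff]; aesop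

lemma adj_p2_iff {w : V10 n m} {j : Fin m} :
    s(w, p2 j) ∈ E10 n m lit ↔ w = c2 j ∨ w = litV10 n m (lit j 2) := by
  simp only [E10, Set.mem_ofPred_eq, Sym2.eq_iff, eq_litV10_iff]; aesop

lemma adj_vx_iff {w : V10 n m} {i : Fin n} :
    s(w, vx i) ∈ E10 n m lit ↔ w = pos i ∨ w = neg i := by
  simp only [E10, Set.mem_ofPred_eq, Sym2.eq_iff, eq_litV10_iff]; aesop

lemma eq_vx_or_clause_of_adj_litV10 {w : V10 n m} {q : Fin n × Bool}
    (h : s(w, litV10 n m q) ∈ E10 n m lit) : w = vx q.1 ∨ ∃ j, w = p1 j ∨ w = p2 j := by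
  simp only [E10, Set.mem_ofPred_eq, Sym2.eq_iff, eq_litV10_iff, litV10_eq_iff] at h; aesop

def assignmentSet (lit : Fin m → Fin 3 → Fin n × Bool) (T : Fin n → Bool) : Set (V10 n m) :=
  {v | match v with
    | c3 _ | c4 _ | vx _ => True
    | pos i => T i = true
    | neg i => T i = false
    | c1 j => T (lit j 0).1 ≠ (lit j 0).2 ∧ T (lit j 1).1 ≠ (lit j 1).2
    | c2 j => T (lit j 2).1 ≠ (lit j 2).2
    | p1 _ | p2 _ | c5 _ => False}

variable {T : Fin n → Bool}

lemma litV10_mem_assignmentSet_iff {q : Fin n × Bool} :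
    litV10 n m q ∈ assignmentSet lit T ↔ T q.1 = q.2 := by
  obtain ⟨i, _ | _⟩ := q <;> simp [litV10, assignmentSet]

lemma domSet_assignmentSet (lit : Fin m → Fin 3 → Fin n × Bool) (T : Fin n → Bool) :
    DomSet (E10 n m lit) (assignmentSet lit T) := by
  intro v
  cases v with
  | p1 j =>
    right
    by_cases h0 : T (lit j 0).1 = (lit j 0).2
    · exact ⟨_, litV10_mem_assignmentSet_iff.2 h0, adj_p1_iff.2 (.inr (.inl rfl))⟩
    by_cases h1 : T (lit j 1).1 = (lit j 1).2
    · exact ⟨_, litV10_mem_assignmentSet_iff.2 h1, adj_p1_iff.2 (.inr (.inr rfl))⟩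
    · exact ⟨c1 j, ⟨h0, h1⟩, adj_p1_iff.2 (.inl rfl)⟩
  | p2 j =>
    right
    by_cases h2 : T (lit j 2).1 = (lit j 2).2
    · exact ⟨_, litV10_mem_assignmentSet_iff.2 h2, adj_p2_iff.2 (.inr rfl)⟩
    · exact ⟨c2 j, h2, adj_p2_iff.2 (.inl rfl)⟩
  | c1 j => exact .inr ⟨c3 j, trivial, adj_c1_iff.2 (.inr rfl)⟩
  | c2 j => exact .inr ⟨c3 j, trivial, adj_c2_iff.2 (.inr rfl)⟩
  | c5 j => exact .inr ⟨c4 j, trivial, adj_c5_iff.2 rfl⟩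
  | pos i =>
    by_cases h : T i = true
    · exact .inl h
    · exact .inr ⟨vx i, trivial, Sym2.eq_swap ▸ adj_vx_iff.2 (.inl rfl)⟩
  | neg i =>
    by_cases h : T i = false
    · exact .inl h
    · exact .inr ⟨vx i, trivial, Sym2.eq_swap ▸ adj_vx_iff.2 (.inr rfl)⟩
  | c3 _ | c4 _ | vx _ => exact .inl trivial

lemma isPrivateNbr_vx (i : Fin n) :
    IsPrivateNbr (E10 n m lit) (assignmentSet lit T) (vx i) (litV10 n m (i, !T i)) := by
  rintro w hw (rfl | hadj)
  · simp [litV10_mem_assignmentSet_iff] at hw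
  · rcases eq_vx_or_clause_of_adj_litV10 hadj with h | ⟨j, rfl | rfl⟩
    · exact h
    all_goals simp [assignmentSet] at hw

lemma isPrivateNbr_c4 (j : Fin m) :
    IsPrivateNbr (E10 n m lit) (assignmentSet lit T) (c4 j) (c5 j) := by
  rintro w hw (rfl | hadj)
  · simp [assignmentSet] at hw
  · exact adj_c5_iff.1 hadj

lemma exists_isPrivateNbr_c3 (j : Fin m) (hj : ∃ k, T (lit j k).1 = (lit j k).2) :
    ∃ p, IsPrivateNbr (E10 n m lit) (assignmentSet lit T) (c3 j) p := by
  by_cases h01 : T (lit j 0).1 = (lit j 0).2 ∨ T (lit j 1).1 = (lit j 1).2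
  · refine ⟨c1 j, ?_⟩
    rintro w hw (rfl | hadj)
    · simp [assignmentSet] at hw; tauto
    · rcases adj_c1_iff.1 hadj with rfl | rfl
      · simp [assignmentSet] at hw
      · rfl
  · have h2 : T (lit j 2).1 = (lit j 2).2 := by
      obtain ⟨k, hk⟩ := hj
      fin_cases k <;> simp_all
    refine ⟨c2 j, ?_⟩
    rintro w hw (rfl | hadj)
    · simp [assignmentSet] at hw; tauto
    · rcases adj_c2_iff.1 hadj with rfl | rfl
      · simp [assignmentSet] at hw
      · rfl

lemma U10_subset_of_subset_assignmentSet (hT : ∀ j, ∃ k, T (lit j k).1 = (lit j k).2)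
    {S : Set (V10 n m)} (hS : DomSet (E10 n m lit) S) (hsub : S ⊆ assignmentSet lit T) :
    U10 n m ⊆ S := by
  rintro u (⟨j, rfl | rfl⟩ | ⟨i, rfl⟩)
  · obtain ⟨p, hp⟩ := exists_isPrivateNbr_c3 j (hT j)
    exact hS.mem_of_isPrivateNbr hsub hp
  · exact hS.mem_of_isPrivateNbr hsub (isPrivateNbr_c4 j)
  · exact hS.mem_of_isPrivateNbr hsub (isPrivateNbr_vx i)

variable {S : Set (V10 n m)}

lemma not_pos_mem_and_neg_mem (hU : U10 n m ⊆ S) (hS : DomSet (E10 n m lit) S)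
    (hmin : ∀ S' ⊂ S, ¬ DomSet (E10 n m lit) S') (i : Fin n) :
    ¬ (pos i ∈ S ∧ neg i ∈ S) := by
  rintro ⟨hpos, hneg⟩
  obtain ⟨p, hpu, hp⟩ := hS.exists_isPrivateNbr hmin (hU (Or.inr ⟨i, rfl⟩))
  rw [Sym2.eq_swap, adj_vx_iff] at hpu
  rcases hpu with rfl | rfl | rfl
  · simpa using hp _ hpos (Or.inr (adj_vx_iff.2 (Or.inl rfl)))
  · simpa using hp _ hpos (Or.inl rfl)
  · simpa using hp _ hneg (Or.inl rfl)

lemma exists_litV10_mem (hU : U10 n m ⊆ S) (hS : DomSet (E10 n m lit) S)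
    (hmin : ∀ S' ⊂ S, ¬ DomSet (E10 n m lit) S') (j : Fin m) :
    ∃ k, litV10 n m (lit j k) ∈ S := by
  have hc4 : c4 j ∈ S := hU (Or.inl ⟨j, Or.inr rfl⟩)
  obtain ⟨p, hpu, hp⟩ := hS.exists_isPrivateNbr hmin (hU (Or.inl ⟨j, Or.inl rfl⟩))
  rw [Sym2.eq_swap, adj_c3_iff] at hpu
  rcases hpu with rfl | rfl | rfl | rfl
  · simpa using hp _ hc4 (Or.inr (adj_c3_iff.2 (Or.inr (Or.inr rfl))))
  · have hc1 : c1 j ∉ S := fun h => by simpa using hp _ h (Or.inl rfl)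
    have hp1 : p1 j ∉ S := fun h => by simpa using hp _ h (Or.inr (adj_c1_iff.2 (Or.inl rfl)))
    obtain ⟨w, hw, hwp⟩ := (hS (p1 j)).resolve_left hp1
    rcases adj_p1_iff.1 hwp with rfl | rfl | rfl
    exacts [absurd hw hc1, ⟨0, hw⟩, ⟨1, hw⟩]
  · have hc2 : c2 j ∉ S := fun h => by simpa using hp _ h (Or.inl rfl)
    have hp2 : p2 j ∉ S := fun h => by simpa using hp _ h (Or.inr (adj_c2_iff.2 (Or.inl rfl)))
    obtain ⟨w, hw, hwp⟩ := (hS (p2 j)).resolve_left hp2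
    rcases adj_p2_iff.1 hwp with rfl | rfl
    exacts [absurd hw hc2, ⟨2, hw⟩]
  · simpa using hp _ hc4 (Or.inl rfl)

lemma eq_of_litV10_mem (hT : ∀ i, T i = true ↔ pos i ∈ S)
    (hconsistent : ∀ i, ¬ (pos i ∈ S ∧ neg i ∈ S)) {q : Fin n × Bool} (hq : litV10 n m q ∈ S) :
    T q.1 = q.2 := by
  obtain ⟨i, _ | _⟩ := q
  · change T i = false
    rw [← Bool.not_eq_true, hT]
    exact fun h => hconsistent i ⟨h, hq⟩
  · exact (hT i).2 hq

end V10

theorem stmt_10 (n m : ℕ) (lit : Fin m → Fin 3 → Fin n × Bool) :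
    (∃ T : Fin n → Bool, ∀ j : Fin m, ∃ k : Fin 3, T (lit j k).1 = (lit j k).2) ↔
      (∃ S : Set (V10 n m), U10 n m ⊆ S ∧ DomSet (E10 n m lit) S ∧
        ∀ S' : Set (V10 n m), S' ⊂ S → ¬ DomSet (E10 n m lit) S') := by
  constructor
  · rintro ⟨T, hT⟩
    obtain ⟨S, hsub, hS, hmin⟩ := 
      (V10.domSet_assignmentSet lit T).exists_minimal_subset
    exact ⟨S, V10.U10_subset_of_subset_assignmentSet hT hS hsub, hS, hmin⟩
  · rintro ⟨S, hU, hS, hmin⟩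
    classical
    refine ⟨fun i => decide (V10.pos i ∈ S), fun j => ?_⟩
    obtain ⟨k, hk⟩ := V10.exists_litV10_mem hU hS hmin j
    exact ⟨k, V10.eq_of_litV10_mem (fun _ => decide_eq_true_iff) (V10.not_pos_mem_and_neg_mem hU hS hmin) hk⟩
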